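/- β-independence of the normalized wavefunction: let M ≥ N ≥ 1, let m ∈ {0,1}^M with ∑ m_j = N, and let z₁,…,z_N ∈ ℂ. Then for all β, β′ ∈ ℂ: ⟨m| B̃_β(z₁)∘⋯∘B̃_β(z_N) |Ω⟩ · ∏_{1≤j<k≤N}(z_j + z_k + 2β′z_j z_k) = ⟨m| B̃_{β′}(z₁)∘⋯∘B̃_{β′}(z_N) |Ω⟩ · ∏_{1≤j<k≤N}(z_j + z_k + 2βz_j z_k). In particular, ⟨m| B̃_β(z₁)∘⋯∘B̃_β(z_N) |Ω⟩ is divisible (as a polynomial in β and the z's) by ∏_{1≤j<k≤N}(z_j + z_k + 2βz_j z_k), with quotient independent of β. -/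

import Mathlib

noncomputable section

/-- The renormalized six-vertex L-operator L̃_β(z), as a matrix on ℂ² ⊗ ℂ² in
the ordered basis (e₀⊗e₀, e₀⊗e₁, e₁⊗e₀, e₁⊗e₁); the first factor is the
auxiliary space. -/
def Ltilde (β z : ℂ) : Matrix (Fin 2 × Fin 2) (Fin 2 × Fin 2) ℂ :=
  fun p q =>
    if p = ((0 : Fin 2), (0 : Fin 2)) ∧ q = (0, 0) then 1
    else if p = (0, 1) ∧ q = (0, 1) then 1 + 2 * β * z
    else if p = (0, 1) ∧ q = (1, 0) then 2 * z
    else if p = (1, 0) ∧ q = (0, 1) then 1 + β * z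
    else if p = (1, 0) ∧ q = (1, 0) then z
    else if p = (1, 1) ∧ q = (1, 1) then z
    else 0

/-- A two-site operator acting on the auxiliary space ℂ²_a and the j-th site of
(ℂ²)^{⊗M}, as a matrix on ℂ²_a ⊗ (ℂ²)^{⊗M}. -/
def siteOp (M : ℕ) (L : Matrix (Fin 2 × Fin 2) (Fin 2 × Fin 2) ℂ) (j : Fin M) :
    Matrix (Fin 2 × (Fin M → Fin 2)) (Fin 2 × (Fin M → Fin 2)) ℂ :=
  fun p q => L (p.1, p.2 j) (q.1, q.2 j) *
    (if ∀ k, k ≠ j → p.2 k = q.2 k then 1 else 0)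

/-- The homogeneous monodromy matrix T_a = L_{aM} ∘ ⋯ ∘ L_{a1}
(site 1 acts first) built from a common L-operator. -/
def monoH (M : ℕ) (L : Matrix (Fin 2 × Fin 2) (Fin 2 × Fin 2) ℂ) :
    Matrix (Fin 2 × (Fin M → Fin 2)) (Fin 2 × (Fin M → Fin 2)) ℂ :=
  (List.ofFn fun k : Fin M => siteOp M L k.rev).prod

/-- B̃_β(z) = ⟨0|_a T̃_a(z) |1⟩_a for the renormalized six-vertex model. -/
def BtildeOp (M : ℕ) (β z : ℂ) : Matrix (Fin M → Fin 2) (Fin M → Fin 2) ℂ :=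
  fun s s' => monoH M (Ltilde β z) (0, s) (1, s')

/-!
The L-operators L̃_b(z) and L̃_c(w) satisfy an RLL relation with an R-matrix whose corner entries
are z + w + 2czw and z + w + 2bzw. The RTT relation survives products of factors with commuting
entries, so it holds for the monodromy matrices, and its corner entry is the exchange relation
(z + w + 2czw) B̃_b(z) B̃_c(w) = (z + w + 2bzw) B̃_c(w) B̃_b(z). For b = c this makes B̃_b(z) and
B̃_b(w) commute off the (at most one-point) zero set of z + w + 2bzw, hence everywhere by
continuity in w. Moreover B̃_b(z)|Ω⟩ does not depend on b, since b only enters the columns of L̃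
with physical input e₁, which never act on the vacuum.

Induction on N: after the induction hypothesis has turned the tail into B̃_{β'}(z₂)⋯B̃_{β'}(z_N),
move B̃_β(z₁) through it to the vacuum with the exchange relation, which trades the factors
z₁ + z_k + 2β'z₁z_k for z₁ + z_k + 2βz₁z_k; there replace it by B̃_{β'}(z₁) and commute it back.
-/

namespace Matrix

section KroneckerPi

variable {ι n R : Type*} [Fintype ι] [CommSemiring R]

def kroneckerPi (A : ι → Matrix n n R) : Matrix (ι → n) (ι → n) R :=
  of fun s t => ∏ i, A i (s i) (t i)

theorem kroneckerPi_mul [DecidableEq ι] [Fintype n] (A B : ι → Matrix n n R) :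
    kroneckerPi (A * B) = kroneckerPi A * kroneckerPi B := by
  ext s t
  simp only [kroneckerPi, of_apply, Pi.mul_apply, mul_apply, Fintype.prod_sum,
    Finset.prod_mul_distrib]

theorem kroneckerPi_one [DecidableEq n] : kroneckerPi (1 : ι → Matrix n n R) = 1 := by
  ext s t
  simp [kroneckerPi, one_apply, Finset.prod_boole, funext_iff]

variable [DecidableEq ι] [DecidableEq n]

theorem kroneckerPi_mulSingle_apply (j : ι) (m : Matrix n n R) (s t : ι → n) :
    kroneckerPi (Pi.mulSingle j m) s t =
      m (s j) (t j) * if ∀ k, k ≠ j → s k = t k then 1 else 0 := by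
  have hoff : ∀ i ∈ ({j}ᶜ : Finset ι),
      (Pi.mulSingle j m : ι → Matrix n n R) i (s i) (t i) = if s i = t i then 1 else 0 :=
    fun i hi => by rw [Pi.mulSingle_eq_of_ne (by simpa using hi), one_apply]
  rw [kroneckerPi, of_apply, Fintype.prod_eq_mul_prod_compl j, Pi.mulSingle_eq_same,
    Finset.prod_congr rfl hoff, Finset.prod_boole]
  simp

variable [Fintype n]

def siteEmbedding (j : ι) : Matrix n n R →ₐ[R] Matrix (ι → n) (ι → n) R :=
  AlgHom.ofLinearMap
    { toFun := fun m => kroneckerPi (Pi.mulSingle j m)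
      map_add' := fun m m' => by
        ext s t
        simp only [kroneckerPi_mulSingle_apply, add_apply, add_mul]
      map_smul' := fun r m => by
        ext s t
        simp only [kroneckerPi_mulSingle_apply, smul_apply, smul_eq_mul, mul_assoc,
          RingHom.id_apply] }
    (by simp [kroneckerPi_one])
    (fun m m' => by
      simp only [LinearMap.coe_mk, AddHom.coe_mk, ← kroneckerPi_mul, Pi.mulSingle_mul])

theorem siteEmbedding_apply (j : ι) (m : Matrix n n R) (s t : ι → n) :
    siteEmbedding j m s t = m (s j) (t j) * if ∀ k, k ≠ j → s k = t k then 1 else 0 :=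
  kroneckerPi_mulSingle_apply j m s t

theorem commute_siteEmbedding {j k : ι} (hjk : j ≠ k) (m m' : Matrix n n R) :
    Commute (siteEmbedding j m) (siteEmbedding k m') := by
  show kroneckerPi _ * kroneckerPi _ = kroneckerPi _ * kroneckerPi _
  rw [← kroneckerPi_mul, ← kroneckerPi_mul,
    (Pi.mulSingle_commute (f := fun _ => Matrix n n R) hjk m m').eq]

end KroneckerPi

section NoncommEntries

variable {ι A : Type*} [Fintype ι] [Semiring A]

theorem commute_mul_apply {x : A} {S P : Matrix ι ι A} (hS : ∀ i j, Commute x (S i j))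
    (hP : ∀ i j, Commute x (P i j)) (i j : ι) : Commute x ((S * P) i j) :=
  Commute.sum_right _ _ _ fun l _ => (hS i l).mul_right (hP l j)

theorem commute_list_prod_apply [DecidableEq ι] {x : A} {l : List (Matrix ι ι A)}
    (h : ∀ T ∈ l, ∀ i j, Commute x (T i j)) (i j : ι) : Commute x (l.prod i j) := by
  induction l generalizing i j with
  | nil =>
    rw [List.prod_nil, one_apply]
    split_ifs
    exacts [Commute.one_right x, Commute.zero_right x]
  | cons T l ih =>
    rw [List.prod_cons]
    exact commute_mul_apply (h T List.mem_cons_self)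
      (ih fun T' hT' => h T' (List.mem_cons_of_mem T hT')) i j

theorem list_prod_apply_eq_zero_of_ne [DecidableEq ι] {α : Type*} (f : ι → α)
    {l : List (Matrix ι ι A)} (hl : ∀ X ∈ l, ∀ p q, f p ≠ f q → X p q = 0) {p q : ι}
    (hpq : f p ≠ f q) : l.prod p q = 0 := by
  induction l generalizing p with
  | nil => exact one_apply_ne fun h => hpq (congrArg f h)
  | cons X l ih =>
    rw [List.prod_cons, mul_apply]
    refine Finset.sum_eq_zero fun u _ => ?_
    by_cases hu : f p = f u
    · rw [ih (fun Y hY => hl Y (List.mem_cons_of_mem X hY)) (hu ▸ hpq), mul_zero]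
    · rw [hl X List.mem_cons_self p u hu, zero_mul]

theorem kroneckerMap_mul_mul_of_commute {S S' P P' : Matrix ι ι A}
    (h : ∀ i j k l, Commute (P i j) (S' k l)) :
    kroneckerMap (· * ·) (S * P) (S' * P') =
      kroneckerMap (· * ·) S S' * kroneckerMap (· * ·) P P' := by
  ext ⟨i, i'⟩ ⟨j, j'⟩
  simp only [kroneckerMap_apply, mul_apply, Fintype.sum_prod_type, Finset.sum_mul_sum]
  exact Finset.sum_congr rfl fun l _ => Finset.sum_congr rfl fun l' _ =>
    (h l j i' l').mul_mul_mul_comm _ _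

theorem kroneckerMap_swap_mul_mul_of_commute {S S' P P' : Matrix ι ι A}
    (h : ∀ i j k l, Commute (S i j) (P' k l)) :
    kroneckerMap (fun x y => y * x) (S * P) (S' * P') =
      kroneckerMap (fun x y => y * x) S S' * kroneckerMap (fun x y => y * x) P P' := by
  ext ⟨i, i'⟩ ⟨j, j'⟩
  simp only [kroneckerMap_apply, mul_apply, Fintype.sum_prod_type, Finset.sum_mul_sum]
  rw [Finset.sum_comm]
  exact Finset.sum_congr rfl fun l _ => Finset.sum_congr rfl fun l' _ =>
    ((h i l l' j').mul_mul_mul_comm _ _).symm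

/-- `R T₁ T'₂ = T'₂ T₁ R`, with `T₁ = T ⊗ 1` and `T'₂ = 1 ⊗ T'`. The entries of `T` and `T'`
need not commute, so on the right each entry product has the factor from `T'` first. -/
def RTTRelation (R : Matrix (ι × ι) (ι × ι) A) (T T' : Matrix ι ι A) : Prop :=
  R * kroneckerMap (· * ·) T T' = kroneckerMap (fun x y => y * x) T T' * R

namespace RTTRelation

variable {R : Matrix (ι × ι) (ι × ι) A}

theorem one [DecidableEq ι] : RTTRelation R (1 : Matrix ι ι A) 1 := by
  rw [RTTRelation, kroneckerMap_one_one _ zero_mul mul_zero (mul_one 1),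
    kroneckerMap_one_one (fun x y : A => y * x) mul_zero zero_mul (mul_one 1), mul_one, one_mul]

theorem mul {S S' P P' : Matrix ι ι A} (hS : RTTRelation R S S') (hP : RTTRelation R P P')
    (h₁ : ∀ i j k l, Commute (P i j) (S' k l)) (h₂ : ∀ i j k l, Commute (S i j) (P' k l)) :
    RTTRelation R (S * P) (S' * P') := by
  rw [RTTRelation, kroneckerMap_mul_mul_of_commute h₁, kroneckerMap_swap_mul_mul_of_commute h₂,
    ← mul_assoc, hS, mul_assoc, hP, mul_assoc]

theorem map {B : Type*} [Semiring B] (f : A →+* B) {T T' : Matrix ι ι A}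
    (h : RTTRelation R T T') : RTTRelation (R.map f) (T.map f) (T'.map f) := by
  have e₁ : kroneckerMap (· * ·) (T.map f) (T'.map f) = (kroneckerMap (· * ·) T T').map f := by
    ext; simp
  have e₂ : kroneckerMap (fun x y => y * x) (T.map f) (T'.map f) =
      (kroneckerMap (fun x y => y * x) T T').map f := by
    ext; simp
  rw [RTTRelation, e₁, e₂, ← Matrix.map_mul, ← Matrix.map_mul, h]

theorem list_prod [DecidableEq ι] {κ : Type*} {l : List κ} {T T' : κ → Matrix ι ι A}
    (h : ∀ k ∈ l, RTTRelation R (T k) (T' k))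
    (hl : l.Pairwise fun k k' => ∀ i j i' j',
      Commute (T k i j) (T' k' i' j') ∧ Commute (T' k i j) (T k' i' j')) :
    RTTRelation R (l.map T).prod (l.map T').prod := by
  induction l with
  | nil => exact one
  | cons k l ih =>
    rw [List.pairwise_cons] at hl
    simp only [List.map_cons, List.prod_cons]
    refine (h k List.mem_cons_self).mul (ih (fun k' hk' => h k' (List.mem_cons_of_mem k hk'))
      hl.2) (fun i j i' j' => ?_) (fun i j i' j' => ?_)
    · refine (commute_list_prod_apply (fun P hP i j => ?_) i j).symm
      obtain ⟨k', hk', rfl⟩ := List.mem_map.mp hP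
      exact (hl.1 k' hk' i' j' i j).2
    · refine commute_list_prod_apply (fun P hP i' j' => ?_) i' j'
      obtain ⟨k', hk', rfl⟩ := List.mem_map.mp hP
      exact (hl.1 k' hk' i j i' j').1

end RTTRelation

end NoncommEntries

end Matrix

theorem smul_mul_list_prod_ofFn {K A : Type*} [CommSemiring K] [Semiring A] [Algebra K A]
    {n : ℕ} {x : A} {y : Fin n → A} {e f : Fin n → K}
    (h : ∀ i, e i • (x * y i) = f i • (y i * x)) :
    (∏ i, e i) • (x * (List.ofFn y).prod) = (∏ i, f i) • ((List.ofFn y).prod * x) := by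
  induction n with
  | zero => simp
  | succ n ih =>
    have ih' := ih (y := fun i => y i.succ) (e := fun i => e i.succ) (f := fun i => f i.succ)
      fun i => h i.succ
    simp only [List.ofFn_succ, List.prod_cons, Fin.prod_univ_succ]
    calc (e 0 * ∏ i : Fin n, e i.succ) • (x * (y 0 * (List.ofFn fun i => y i.succ).prod))
        = (∏ i : Fin n, e i.succ) • (e 0 • (x * y 0) * (List.ofFn fun i => y i.succ).prod) := by
          rw [smul_mul_assoc, mul_assoc, smul_smul, mul_comm]
      _ = f 0 • (y 0 * ((∏ i : Fin n, e i.succ) • (x * (List.ofFn fun i => y i.succ).prod))) := by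
          rw [h 0, smul_mul_assoc, mul_smul_comm, smul_comm, mul_assoc]
      _ = _ := by
          rw [ih', mul_smul_comm, smul_smul, mul_assoc]

theorem Fin.prod_prod_Ioi_succ {α : Type*} [CommMonoid α] {n : ℕ}
    (f : Fin (n + 1) → Fin (n + 1) → α) :
    ∏ j, ∏ k ∈ Finset.Ioi j, f j k =
      (∏ k : Fin n, f 0 k.succ) * ∏ j : Fin n, ∏ k ∈ Finset.Ioi j, f j.succ k.succ := by
  simp only [Fin.prod_univ_succ, Fin.prod_Ioi_zero, Fin.prod_Ioi_succ]

open Matrix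

def rMatrix (b c z w : ℂ) : Matrix (Fin 2 × Fin 2) (Fin 2 × Fin 2) ℂ :=
  fun p q =>
    if p = ((0 : Fin 2), (0 : Fin 2)) ∧ q = (0, 0) then z + w + 2 * c * z * w
    else if p = (0, 1) ∧ q = (0, 1) then w - z + 2 * (b - c) * z * w
    else if p = (0, 1) ∧ q = (1, 0) then 2 * z * (1 + c * w)
    else if p = (1, 0) ∧ q = (0, 1) then 2 * w * (1 + b * z)
    else if p = (1, 0) ∧ q = (1, 0) then z - w
    else if p = (1, 1) ∧ q = (1, 1) then z + w + 2 * b * z * w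
    else 0

theorem rttRelation_Ltilde (b c z w : ℂ) :
    RTTRelation ((rMatrix b c z w).map (algebraMap ℂ (Matrix (Fin 2) (Fin 2) ℂ)))
      ((comp _ _ _ _ ℂ).symm (Ltilde b z)) ((comp _ _ _ _ ℂ).symm (Ltilde c w)) := by
  rw [RTTRelation]
  ext ⟨a, a'⟩ ⟨n, n'⟩ q q'
  simp only [Matrix.mul_apply, Fintype.sum_prod_type, Fin.sum_univ_two, kroneckerMap_apply,
    Matrix.map_apply, algebraMap_matrix_apply, comp_symm_apply, Matrix.sum_apply]
  fin_cases a <;> fin_cases a' <;> fin_cases n <;> fin_cases n' <;> fin_cases q <;>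
    fin_cases q' <;> simp [Ltilde, rMatrix] <;> ring

theorem Matrix.RTTRelation.rMatrix_exchange {A : Type*} [Ring A] [Algebra ℂ A] {b c z w : ℂ}
    {T T' : Matrix (Fin 2) (Fin 2) A}
    (h : RTTRelation ((rMatrix b c z w).map (algebraMap ℂ A)) T T') :
    (z + w + 2 * c * z * w) • (T 0 1 * T' 0 1) = (z + w + 2 * b * z * w) • (T' 0 1 * T 0 1) := by
  have h₁₁ := congrFun (congrFun h (0, 0)) (1, 1)
  simp only [Matrix.mul_apply, Fintype.sum_prod_type, Fin.sum_univ_two, kroneckerMap_apply,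
    Matrix.map_apply, rMatrix, Prod.mk.injEq, Fin.isValue, zero_ne_one, one_ne_zero, and_self,
    and_true, and_false, if_true, if_false, map_zero, zero_mul, mul_zero, add_zero, zero_add]
    at h₁₁
  rw [Algebra.smul_def, Algebra.smul_def, h₁₁]
  exact (Algebra.commutes _ _).symm

def vacuum (M : ℕ) : (Fin M → Fin 2) → ℂ :=
  Pi.single (fun _ => 0) 1

section SixVertex

variable {M : ℕ}

theorem comp_symm_siteOp (L : Matrix (Fin 2 × Fin 2) (Fin 2 × Fin 2) ℂ) (j : Fin M) :
    (comp _ _ _ _ ℂ).symm (siteOp M L j) = ((comp _ _ _ _ ℂ).symm L).map (siteEmbedding j) := by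
  ext a b s t
  simp only [comp_symm_apply, Matrix.map_apply, siteEmbedding_apply, siteOp]
  congr

theorem compRingEquiv_symm_monoH (L : Matrix (Fin 2 × Fin 2) (Fin 2 × Fin 2) ℂ) :
    (compRingEquiv (Fin 2) (Fin M → Fin 2) ℂ).symm (monoH M L) =
      ((List.ofFn Fin.rev).map fun j => ((comp _ _ _ _ ℂ).symm L).map (siteEmbedding j)).prod := by
  rw [monoH, map_list_prod, List.map_ofFn, List.map_ofFn]
  congr 2
  funext k
  exact comp_symm_siteOp L k.rev

theorem rttRelation_monoH (b c z w : ℂ) :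
    RTTRelation ((rMatrix b c z w).map (algebraMap ℂ _))
      ((compRingEquiv (Fin 2) (Fin M → Fin 2) ℂ).symm (monoH M (Ltilde b z)))
      ((compRingEquiv (Fin 2) (Fin M → Fin 2) ℂ).symm (monoH M (Ltilde c w))) := by
  rw [compRingEquiv_symm_monoH, compRingEquiv_symm_monoH]
  refine RTTRelation.list_prod (fun j _ => ?_) ?_
  · have := (rttRelation_Ltilde b c z w).map (siteEmbedding j : _ →ₐ[ℂ] _).toRingHom
    rwa [Matrix.map_map, show (siteEmbedding j : _ →ₐ[ℂ] _).toRingHom ∘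
      algebraMap ℂ (Matrix (Fin 2) (Fin 2) ℂ) = algebraMap ℂ _ from
        funext (siteEmbedding j).commutes] at this
  · exact (List.nodup_ofFn.mpr Fin.rev_injective).imp fun hjk i j i' j' =>
      ⟨commute_siteEmbedding hjk _ _, commute_siteEmbedding hjk _ _⟩

theorem BtildeOp_exchange (b c z w : ℂ) :
    (z + w + 2 * c * z * w) • (BtildeOp M b z * BtildeOp M c w) =
      (z + w + 2 * b * z * w) • (BtildeOp M c w * BtildeOp M b z) :=
  (rttRelation_monoH b c z w).rMatrix_exchange

theorem continuous_BtildeOp_apply (β : ℂ) (s s' : Fin M → Fin 2) :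
    Continuous fun z => BtildeOp M β z s s' := by
  have hL : ∀ p q, Continuous fun z => Ltilde β z p q := fun p q => by
    unfold Ltilde
    split_ifs <;> fun_prop
  have hT : Continuous fun z => monoH M (Ltilde β z) := by
    simp only [monoH, List.ofFn_eq_map]
    exact continuous_list_prod _ fun j _ =>
      continuous_matrix fun p q => (hL _ _).mul continuous_const
  exact hT.matrix_elem (0, s) (1, s')

theorem commute_BtildeOp (β z w : ℂ) : Commute (BtildeOp M β z) (BtildeOp M β w) := by
  have hroot : ∀ w, z + w + 2 * β * z * w = 0 → w = -z / (1 + 2 * β * z) := fun w hw => by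
    have hz : 1 + 2 * β * z ≠ 0 := fun h => by
      have : z = 0 := by linear_combination hw - w * h
      simp [this] at h
    rw [eq_div_iff hz]
    linear_combination hw
  have hdense : Dense {w | z + w + 2 * β * z * w ≠ 0} :=
    (dense_compl_singleton (-z / (1 + 2 * β * z))).mono fun w (hw : w ≠ _) h => hw (hroot w h)
  ext s s'
  have hl : Continuous fun w => (BtildeOp M β z * BtildeOp M β w) s s' :=
    continuous_finsetSum _ fun t _ => continuous_const.mul (continuous_BtildeOp_apply β t s')
  have hr : Continuous fun w => (BtildeOp M β w * BtildeOp M β z) s s' :=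
    continuous_finsetSum _ fun t _ => (continuous_BtildeOp_apply β s t).mul continuous_const
  refine congrFun (hl.ext_on hdense hr fun w hw => ?_) w
  exact congrFun (congrFun (smul_right_injective _ hw (BtildeOp_exchange β β z w)) s) s'

theorem monoH_eq_list_prod (L : Matrix (Fin 2 × Fin 2) (Fin 2 × Fin 2) ℂ) :
    monoH M L = ((List.ofFn Fin.rev).map (siteOp M L)).prod := by
  rw [monoH, List.map_ofFn]
  rfl

theorem siteOp_apply_eq_zero {j k : Fin M} (hkj : k ≠ j)
    (L : Matrix (Fin 2 × Fin 2) (Fin 2 × Fin 2) ℂ) {p q : Fin 2 × (Fin M → Fin 2)}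
    (h : p.2 j ≠ q.2 j) : siteOp M L k p q = 0 := by
  rw [siteOp, if_neg fun hall => h (hall j hkj.symm), mul_zero]

theorem list_prod_siteOp_apply_vacuum {L L' : Matrix (Fin 2 × Fin 2) (Fin 2 × Fin 2) ℂ}
    (hL : ∀ x y, L x (y, 0) = L' x (y, 0)) {js : List (Fin M)} (hjs : js.Nodup)
    (p : Fin 2 × (Fin M → Fin 2)) (a : Fin 2) :
    (js.map (siteOp M L)).prod p (a, fun _ => 0) =
      (js.map (siteOp M L')).prod p (a, fun _ => 0) := by
  induction js generalizing p with
  | nil => rfl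
  | cons j js ih =>
    obtain ⟨hj, hjs⟩ := List.nodup_cons.mp hjs
    simp only [List.map_cons, List.prod_cons, mul_apply]
    refine Finset.sum_congr rfl fun u _ => ?_
    by_cases hu : u.2 j = 0
    · rw [ih hjs u, siteOp, siteOp, hu, hL]
    · have hrest : ∀ L'' : Matrix (Fin 2 × Fin 2) (Fin 2 × Fin 2) ℂ,
          (js.map (siteOp M L'')).prod u (a, fun _ => 0) = 0 := fun L'' =>
        list_prod_apply_eq_zero_of_ne (fun q => q.2 j) (fun X hX r r' hr => by
          obtain ⟨k, hk, rfl⟩ := List.mem_map.mp hX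
          exact siteOp_apply_eq_zero (ne_of_mem_of_not_mem hk hj) L'' hr) hu
      rw [hrest, hrest, mul_zero, mul_zero]

theorem BtildeOp_mulVec_vacuum (β β' z : ℂ) :
    BtildeOp M β z *ᵥ vacuum M = BtildeOp M β' z *ᵥ vacuum M := by
  have hL : ∀ x y, Ltilde β z x (y, 0) = Ltilde β' z x (y, 0) := by
    intro x y
    fin_cases x <;> fin_cases y <;> rfl
  ext s
  rw [vacuum, mulVec_single_one, mulVec_single_one, col_apply, col_apply, BtildeOp, BtildeOp,
    monoH_eq_list_prod, monoH_eq_list_prod]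
  exact list_prod_siteOp_apply_vacuum hL (List.nodup_ofFn.mpr Fin.rev_injective) (0, s) 1

theorem pair_prod_smul_BtildeOp_prod_mulVec_vacuum (β β' : ℂ) {N : ℕ} (z : Fin N → ℂ) :
    (∏ j, ∏ k ∈ Finset.Ioi j, (z j + z k + 2 * β' * z j * z k)) •
        ((List.ofFn fun j => BtildeOp M β (z j)).prod *ᵥ vacuum M) =
      (∏ j, ∏ k ∈ Finset.Ioi j, (z j + z k + 2 * β * z j * z k)) •
        ((List.ofFn fun j => BtildeOp M β' (z j)).prod *ᵥ vacuum M) := by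
  induction N with
  | zero => simp
  | succ N ih =>
    set E : ℂ → ℂ := fun c => ∏ k : Fin N, (z 0 + z k.succ + 2 * c * z 0 * z k.succ)
    set Q : ℂ → ℂ := fun c =>
      ∏ j : Fin N, ∏ k ∈ Finset.Ioi j, (z j.succ + z k.succ + 2 * c * z j.succ * z k.succ)
    set P : ℂ → Matrix (Fin M → Fin 2) (Fin M → Fin 2) ℂ := fun c =>
      (List.ofFn fun j : Fin N => BtildeOp M c (z j.succ)).prod
    have hcomm : Commute (BtildeOp M β' (z 0)) (P β') :=
      Commute.list_prod_right _ _ fun y hy => by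
        obtain ⟨i, rfl⟩ := List.mem_ofFn.mp hy
        exact commute_BtildeOp β' _ _
    rw [Fin.prod_prod_Ioi_succ, Fin.prod_prod_Ioi_succ, List.ofFn_succ, List.ofFn_succ,
      List.prod_cons, List.prod_cons]
    calc (E β' * Q β') • ((BtildeOp M β (z 0) * P β) *ᵥ vacuum M)
        = E β' • (BtildeOp M β (z 0) *ᵥ (Q β' • (P β *ᵥ vacuum M))) := by
          rw [← mulVec_mulVec, mulVec_smul, smul_smul]
      _ = E β' • (BtildeOp M β (z 0) *ᵥ (Q β • (P β' *ᵥ vacuum M))) := by rw [ih]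
      _ = Q β • ((E β' • (BtildeOp M β (z 0) * P β')) *ᵥ vacuum M) := by
          rw [mulVec_smul, mulVec_mulVec, smul_mulVec, smul_comm]
      _ = Q β • ((E β • (P β' * BtildeOp M β (z 0))) *ᵥ vacuum M) := by
          rw [smul_mul_list_prod_ofFn fun i => BtildeOp_exchange β β' (z 0) (z i.succ)]
      _ = (E β * Q β) • (P β' *ᵥ (BtildeOp M β' (z 0) *ᵥ vacuum M)) := by
          rw [smul_mulVec, ← mulVec_mulVec, BtildeOp_mulVec_vacuum β β', smul_smul, mul_comm]
      _ = (E β * Q β) • ((BtildeOp M β' (z 0) * P β') *ᵥ vacuum M) := by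
          rw [mulVec_mulVec, hcomm.eq]

end SixVertex

theorem normalized_wavefunction_beta_independent_general (M N : ℕ)
    (m : Fin M → Fin 2)
    (z : Fin N → ℂ) (β β' : ℂ) :
    ((List.ofFn fun j : Fin N => BtildeOp M β (z j)).prod m (fun _ => 0)) *
        (∏ j : Fin N, ∏ k ∈ Finset.Ioi j, (z j + z k + 2 * β' * z j * z k)) =
      ((List.ofFn fun j : Fin N => BtildeOp M β' (z j)).prod m (fun _ => 0)) *
        (∏ j : Fin N, ∏ k ∈ Finset.Ioi j, (z j + z k + 2 * β * z j * z k)) := by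
  have h := congrFun (pair_prod_smul_BtildeOp_prod_mulVec_vacuum (M := M) β β' z) m
  rw [vacuum, mulVec_single_one, mulVec_single_one] at h
  simpa only [Pi.smul_apply, col_apply, smul_eq_mul, mul_comm] using h

/-- β-independence of the normalized wavefunction: the wavefunction
⟨m| B̃_β(z₁)⋯B̃_β(z_N) |Ω⟩ divided by ∏_{j<k}(z_j+z_k+2βz_jz_k) does not
depend on β. -/
theorem normalized_wavefunction_beta_independent (M N : ℕ) (hN : 1 ≤ N) (hMN : N ≤ M)
    (m : Fin M → Fin 2) (hm : ∑ j : Fin M, ((m j : ℕ)) = N)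
    (z : Fin N → ℂ) (β β' : ℂ) :
    ((List.ofFn fun j : Fin N => BtildeOp M β (z j)).prod m (fun _ => 0)) *
        (∏ j : Fin N, ∏ k ∈ Finset.Ioi j, (z j + z k + 2 * β' * z j * z k)) =
      ((List.ofFn fun j : Fin N => BtildeOp M β' (z j)).prod m (fun _ => 0)) *
        (∏ j : Fin N, ∏ k ∈ Finset.Ioi j, (z j + z k + 2 * β * z j * z k)) :=
  normalized_wavefunction_beta_independent_general M N m z β β'
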